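/- arXiv:0802.4359 — 4 statements merged into one kernel-verified Lean document; each statement's English description precedes it below -/
import Mathlib

section
/- The automorphism R_{(a b⁻¹ a)⁴} of the free group F_2 on generators a, b is the inner automorphism of conjugation by the commutator b a b⁻¹ a⁻¹; that is, for every u ∈ F_2, R_{(a b⁻¹ a)⁴}(u) = (b a b⁻¹ a⁻¹) u (b a b⁻¹ a⁻¹)⁻¹. -/
namespace PalWord

/-- The free group on two generators `a`, `b`. -/
abbrev F : Type := FreeGroup Bool

/-- The first generator `a` of the free group `F`. -/
def a : F := FreeGroup.of false

/-- The second generator `b` of the free group `F`. -/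
def b : F := FreeGroup.of true

/-- The automorphism `R_a` of `F`, with `a ↦ a`, `b ↦ b a`. -/
def Ra : MulAut F :=
  MonoidHom.toMulEquiv
    (FreeGroup.lift (fun x => if x then b * a else a))
    (FreeGroup.lift (fun x => if x then b * a⁻¹ else a))
    (by ext x; cases x <;> simp [a, b])
    (by ext x; cases x <;> simp [a, b])

/-- The automorphism `R_b` of `F`, with `a ↦ a b`, `b ↦ b`. -/
def Rb : MulAut F :=
  MonoidHom.toMulEquiv
    (FreeGroup.lift (fun x => if x then b else a * b))
    (FreeGroup.lift (fun x => if x then b else a * b⁻¹))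
    (by ext x; cases x <;> simp [a, b])
    (by ext x; cases x <;> simp [a, b])

/-- The homomorphism `w ↦ R_w` from `F` to `Aut(F)`, sending `a` to `R_a` and `b` to `R_b`. -/
def R : F →* MulAut F := FreeGroup.lift (fun x => if x then Rb else Ra)

/-
The square of `φ = R_{a b⁻¹ a}` is conjugation by `b a` after the involution `ι` inverting both
generators. Since `ι` sends `b a` to `b⁻¹ a⁻¹`, we get
`φ⁴ = conj (b a) ∘ ι ∘ conj (b a) ∘ ι = conj (b a) ∘ conj (b⁻¹ a⁻¹) = conj (b a b⁻¹ a⁻¹)`.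
-/

theorem _root_.MulAut.mul_conj {G : Type*} [Group G] (f : MulAut G) (g : G) :
    f * MulAut.conj g = MulAut.conj (f g) * f := by
  ext h
  simp [MulAut.conj_apply]

theorem mulAut_ext {f g : MulAut F} (ha : f a = g a) (hb : f b = g b) : f = g :=
  MulEquiv.toMonoidHom_injective <| FreeGroup.ext_hom _ _ fun x => by cases x <;> assumption

@[simp] lemma Ra_a : Ra a = a := by simp [Ra, a, b]
@[simp] lemma Ra_b : Ra b = b * a := by simp [Ra, a, b]
@[simp] lemma Rb_symm_a : Rb.symm a = a * b⁻¹ := rfl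
@[simp] lemma Rb_symm_b : Rb.symm b = b := rfl
@[simp] lemma R_a : R a = Ra := by simp [R, a]
@[simp] lemma R_b : R b = Rb := by simp [R, b]

lemma R_abinva_a : R (a * b⁻¹ * a) a = b⁻¹ := by
  simp [MulAut.mul_apply]

lemma R_abinva_b : R (a * b⁻¹ * a) b = b * a * b⁻¹ := by
  simp [MulAut.mul_apply, mul_assoc]

def invGens : MulAut F :=
  MonoidHom.toMulEquiv (FreeGroup.lift fun x => (FreeGroup.of x)⁻¹)
    (FreeGroup.lift fun x => (FreeGroup.of x)⁻¹) (by ext; simp) (by ext; simp)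

@[simp] lemma invGens_a : invGens a = a⁻¹ := by simp [invGens, a]
@[simp] lemma invGens_b : invGens b = b⁻¹ := by simp [invGens, b]

lemma invGens_mul_self : invGens * invGens = 1 :=
  mulAut_ext (by simp [MulAut.mul_apply]) (by simp [MulAut.mul_apply])

lemma mul_self_eq_conj_mul_invGens {φ : MulAut F} (ha : φ a = b⁻¹) (hb : φ b = b * a * b⁻¹) :
    φ * φ = MulAut.conj (b * a) * invGens := by
  refine mulAut_ext ?_ ?_ <;>
    simp only [MulAut.mul_apply, map_mul, map_inv, ha, hb, invGens_a, invGens_b,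
      MulAut.conj_apply] <;> group

lemma R_abinva_sq : R ((a * b⁻¹ * a) ^ 2) = MulAut.conj (b * a) * invGens := by
  rw [map_pow, pow_two]
  exact mul_self_eq_conj_mul_invGens R_abinva_a R_abinva_b

/-- `R_{(a b⁻¹ a)⁴}` is conjugation by the commutator `b a b⁻¹ a⁻¹`. -/
theorem R_abinva_pow_four (u : F) :
    R ((a * b⁻¹ * a) ^ 4) u =
      (b * a * b⁻¹ * a⁻¹) * u * (b * a * b⁻¹ * a⁻¹)⁻¹ := by
  have h : R ((a * b⁻¹ * a) ^ 4) = MulAut.conj (b * a * b⁻¹ * a⁻¹) :=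
    calc R ((a * b⁻¹ * a) ^ 4)
        = (MulAut.conj (b * a) * invGens) ^ 2 := by
          rw [show 4 = 2 * 2 from rfl, pow_mul, map_pow, R_abinva_sq]
      _ = MulAut.conj (b * a) * MulAut.conj (invGens (b * a)) * (invGens * invGens) := by
          rw [pow_two, mul_assoc, ← mul_assoc invGens, MulAut.mul_conj]
          simp only [mul_assoc]
      _ = MulAut.conj (b * a * b⁻¹ * a⁻¹) := by
          rw [invGens_mul_self, mul_one, map_mul invGens, invGens_a, invGens_b, ← map_mul, mul_assoc (b * a)]
  rw [h, MulAut.conj_apply]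

end PalWord
end

section
/- For all elements u, v of the free group F_2 on two generators a, b, the palindromization map satisfies Justin's equation Pal(u v) = L_u(Pal(v)) · Pal(u). -/
namespace PalWord

/-- The palindromization map `Pal(w) = (a b)⁻¹ · R_w(a b)`. -/
def Pal (w : F) : F := (a * b)⁻¹ * R w (a * b)

/-- The automorphism `L_a` of `F`, with `a ↦ a`, `b ↦ a b`. -/
def La : MulAut F :=
  MonoidHom.toMulEquiv
    (FreeGroup.lift (fun x => if x then a * b else a))
    (FreeGroup.lift (fun x => if x then a⁻¹ * b else a))
    (by ext x; cases x <;> simp [a, b])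
    (by ext x; cases x <;> simp [a, b])

/-- The automorphism `L_b` of `F`, with `a ↦ b a`, `b ↦ b`. -/
def Lb : MulAut F :=
  MonoidHom.toMulEquiv
    (FreeGroup.lift (fun x => if x then b else b * a))
    (FreeGroup.lift (fun x => if x then b else b⁻¹ * a))
    (by ext x; cases x <;> simp [a, b])
    (by ext x; cases x <;> simp [a, b])

/-- The homomorphism `w ↦ L_w` sending `a` to `L_a` and `b` to `L_b`. -/
def L : F →* MulAut F := FreeGroup.lift (fun x => if x then Lb else La)

lemma R_apply_ab (w : F) : R w (a * b) = (a * b) * Pal w := by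
  simp only [Pal, mul_inv_rev, map_mul]
  group

lemma Pal_mul (u v : F) : Pal (u * v) = Pal u * R u (Pal v) := by
  simp only [Pal, map_mul, MulAut.mul_apply, R_apply_ab, map_mul, mul_assoc]
  simp [Pal, mul_assoc]

lemma conj_comm (σ : MulAut F) (g : F) :
    MulAut.conj (σ g) * σ = σ * MulAut.conj g := by
  ext x
  simp [MulAut.conj, mul_assoc]

/-- The homomorphism `u ↦ conj (Pal u) ∘ R u`. -/
def φ : F →* MulAut F where
  toFun u := MulAut.conj (Pal u) * R u
  map_one' := by
    show MulAut.conj (Pal 1) * R 1 = 1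
    have h : Pal 1 = 1 := by simp [Pal, mul_assoc]
    rw [h, map_one, map_one, mul_one]
  map_mul' u v := by
    show MulAut.conj (Pal (u * v)) * R (u * v) =
      MulAut.conj (Pal u) * R u * (MulAut.conj (Pal v) * R v)
    rw [Pal_mul, map_mul, map_mul]
    calc MulAut.conj (Pal u) * MulAut.conj (R u (Pal v)) * (R u * R v)
        = MulAut.conj (Pal u) * (MulAut.conj (R u (Pal v)) * R u) * R v := by
          rw [mul_assoc, mul_assoc, mul_assoc]
      _ = MulAut.conj (Pal u) * (R u * MulAut.conj (Pal v)) * R v := by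
          rw [conj_comm]
      _ = MulAut.conj (Pal u) * R u * (MulAut.conj (Pal v) * R v) := by
          rw [mul_assoc, mul_assoc, mul_assoc]

lemma Pal_a : Pal a = a := by
  simp [Pal, R, a, b, Ra, mul_assoc]

lemma Pal_b : Pal b = b := by
  simp [Pal, R, a, b, Rb, mul_assoc]

lemma Pal_of_false : Pal (FreeGroup.of false) = FreeGroup.of false := Pal_a
lemma Pal_of_true : Pal (FreeGroup.of true) = FreeGroup.of true := Pal_b

lemma phi_of (x : Bool) :
    φ (FreeGroup.of x) = MulAut.conj (Pal (FreeGroup.of x)) * R (FreeGroup.of x) := rfl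

lemma phi_eq_L : φ = L := by
  apply FreeGroup.ext_hom
  intro x
  cases x <;>
  · apply MulEquiv.toMonoidHom_injective
    ext y
    cases y <;>
      simp [phi_of, L, R, Pal_of_false, Pal_of_true, a, b, La, Lb, Ra, Rb, MulAut.conj, mul_assoc]

lemma L_eq_conj (u : F) (x : F) : L u x = Pal u * R u x * (Pal u)⁻¹ := by
  rw [← phi_eq_L]
  simp [φ, mul_assoc]

/-- Justin's equation: `Pal(uv) = L_u(Pal(v)) · Pal(u)`. -/
theorem Pal_Justin (u v : F) : Pal (u * v) = L u (Pal v) * Pal u := by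
  rw [Pal_mul, L_eq_conj]
  group

end PalWord
end

section
/- For every element w of the free group F_2 on two generators a, b, one has π(Pal(w)) = (M_w − I₂)·(1,1)ᵀ in ℤ², where π : F_2 → ℤ² is the abelianization sending a to (1,0)ᵀ and b to (0,1)ᵀ, and w ↦ M_w is the homomorphism from F_2 to SL₂(ℤ) sending a to the matrix with rows (1,1),(0,1) and b to the matrix with rows (1,0),(1,1). -/
namespace PalWord

/-- The abelianization map `π : F → ℤ²` sending `a ↦ (1,0)` and `b ↦ (0,1)`,
written multiplicatively. -/
def pi2 : F →* Multiplicative (Fin 2 → ℤ) :=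
  FreeGroup.lift (fun x => Multiplicative.ofAdd (if x then ![0, 1] else ![1, 0]))

/-- The homomorphism `w ↦ M_w : F → SL₂(ℤ)` with `M_a = [[1,1],[0,1]]` and
`M_b = [[1,0],[1,1]]`. -/
def M : F →* Matrix.SpecialLinearGroup (Fin 2) ℤ :=
  FreeGroup.lift (fun x =>
    if x then ⟨!![1, 0; 1, 1], by norm_num [Matrix.det_fin_two_of]⟩
    else ⟨!![1, 1; 0, 1], by norm_num [Matrix.det_fin_two_of]⟩)

/-!
Abelianization intertwines `R_w` with `M_w`: `π (R_w v) = M_w π(v)`. The pairs `(σ, A)` with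
`π ∘ σ = A ∘ π` form a subgroup of `Aut(F₂) × SL₂(ℤ)`, and since `π` is a homomorphism, membership
only has to be checked on the generators, where it is a direct computation. Hence
`π(Pal w) = M_w π(ab) - π(ab)` with `π(ab) = (1, 1)`.
-/

open Matrix

section Intertwining

variable {G H V : Type*} [Group G] [Group H]

def intertwiners [MulAction H V] (f : G → V) : Subgroup (MulAut G × H) where
  carrier := {p | ∀ v, f (p.1 v) = p.2 • f v}
  one_mem' v := (one_smul H (f v)).symm
  mul_mem' {p q} hp hq v := by
    rw [Prod.fst_mul, Prod.snd_mul, MulAut.mul_apply, hp (q.1 v), hq v, mul_smul]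
  inv_mem' {p} hp v := by
    rw [Prod.fst_inv, Prod.snd_inv, eq_inv_smul_iff, ← hp, MulAut.apply_inv_self]

theorem mem_intertwiners [MulAction H V] {f : G → V} {p : MulAut G × H} :
    p ∈ intertwiners f ↔ ∀ v, f (p.1 v) = p.2 • f v :=
  Iff.rfl

theorem mem_intertwiners_iff_forall_of {α : Type*} [AddMonoid V] [DistribMulAction H V]
    (φ : FreeGroup α →* Multiplicative V) (σ : MulAut (FreeGroup α)) (A : H) :
    (σ, A) ∈ intertwiners (fun v => (φ v).toAdd) ↔
      ∀ x, (φ (σ (FreeGroup.of x))).toAdd = A • (φ (FreeGroup.of x)).toAdd := by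
  refine ⟨fun h x => mem_intertwiners.mp h _, fun h => mem_intertwiners.mpr fun v => ?_⟩
  have hom_eq : φ.comp σ.toMonoidHom =
      (DistribSMul.toAddMonoidHom V A).toMultiplicative.comp φ :=
    FreeGroup.ext_hom _ _ h
  exact congrArg Multiplicative.toAdd (DFunLike.congr_fun hom_eq v)

end Intertwining

theorem R_of_M_of_mem_intertwiners (x : Bool) :
    (R (FreeGroup.of x), M (FreeGroup.of x)) ∈ intertwiners fun v => (pi2 v).toAdd := by
  rw [mem_intertwiners_iff_forall_of]
  cases x <;> rintro (_ | _) <;> ext i <;> fin_cases i <;> rfl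

theorem R_M_mem_intertwiners (w : F) : (R w, M w) ∈ intertwiners fun v => (pi2 v).toAdd := by
  induction w using FreeGroup.induction_on with
  | C1 => exact one_mem _
  | of x => exact R_of_M_of_mem_intertwiners x
  | inv_of x ih =>
    rw [map_inv, map_inv]
    exact inv_mem ih
  | mul u v hu hv =>
    rw [map_mul, map_mul]
    exact mul_mem hu hv

/-- `π(Pal(w)) = (M_w − I₂)·(1,1)ᵀ` in `ℤ²`. -/
theorem pi_Pal (w : F) :
    Multiplicative.toAdd (pi2 (Pal w)) =
      Matrix.mulVec ((M w : Matrix (Fin 2) (Fin 2) ℤ) - 1) ![1, 1] := by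
  have pi2_ab : (pi2 (a * b)).toAdd = ![1, 1] := by
    ext i; fin_cases i <;> rfl
  have pi2_R_ab : (pi2 (R w (a * b))).toAdd = M w • (pi2 (a * b)).toAdd :=
    mem_intertwiners.mp (R_M_mem_intertwiners w) (a * b)
  rw [Pal, map_mul, toAdd_mul, map_inv, toAdd_inv, pi2_R_ab, pi2_ab, sub_mulVec, one_mulVec,
    neg_add_eq_sub]
  rfl

end PalWord
end

section
/- The palindromization map Pal : F_2 → F_2 is continuous for the profinite topology on F_2; equivalently, for every u ∈ F_2 and every normal subgroup H of F_2 of finite index, there exists a normal subgroup K of F_2 of finite index such that for all v ∈ F_2 with u⁻¹ v ∈ K one has Pal(u)⁻¹ Pal(v) ∈ H. -/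
/-!
Let `N` be the normal core of `H`. The automorphisms of `F₂` permute the finite set
`Hom(F₂, F₂/N)` by precomposition, so the `w` for which `R_w` acts trivially form a normal
subgroup `K` of finite index. The cocycle identity `Pal(u)⁻¹ Pal(v) = R_u(Pal(u⁻¹v))` reduces
the claim to `π(R_u((ab)⁻¹ R_k(ab))) = 1` for `k ∈ K` and `π : F₂ → F₂/N`, which holds because
`π ∘ R_u ∘ R_k = π ∘ R_u`.
-/

section

variable {G Q : Type*} [Group G] [Group Q]

instance MonoidHom.finite_of_fg [Group.FG G] [Finite Q] : Finite (G →* Q) := by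
  obtain ⟨S, hS⟩ := Group.FG.out (G := G)
  exact Finite.of_injective (fun φ : G →* Q => fun s : S => φ s) fun φ ψ h =>
    MonoidHom.eq_of_eqOn_dense hS fun x hx => congrFun h ⟨x, hx⟩

variable (G Q) in
def MulAut.precompPerm : MulAut G →* Equiv.Perm (G →* Q) where
  toFun σ := MulEquiv.monoidHomCongrLeftEquiv σ
  map_one' := rfl
  map_mul' _ _ := rfl

@[simp]
theorem MulAut.precompPerm_apply (σ : MulAut G) (φ : G →* Q) :
    MulAut.precompPerm G Q σ φ = φ.comp σ.symm.toMonoidHom :=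
  rfl

theorem MulAut.map_apply_of_mem_ker_precompPerm {σ : MulAut G}
    (hσ : σ ∈ (MulAut.precompPerm G Q).ker) (φ : G →* Q) (x : G) : φ (σ x) = φ x :=
  calc φ (σ x) = MulAut.precompPerm G Q σ φ (σ x) := by rw [MonoidHom.mem_ker.1 hσ]; rfl
    _ = φ x := by simp

end

namespace PalWord

theorem Pal_inv_mul_Pal (u v : F) : (Pal u)⁻¹ * Pal v = R u (Pal (u⁻¹ * v)) := by
  simp only [Pal, map_mul, map_inv, MulAut.mul_apply, MulAut.apply_inv_self]
  group

theorem Pal_profinite_continuous_general (u : F) (H : Subgroup F) (hHf : H.FiniteIndex) :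
    ∃ K : Subgroup F, K.Normal ∧ K.FiniteIndex ∧
      ∀ v : F, u⁻¹ * v ∈ K → (Pal u)⁻¹ * Pal v ∈ H := by
  let π := QuotientGroup.mk' H.normalCore
  refine ⟨((MulAut.precompPerm F (F ⧸ H.normalCore)).comp R).ker, inferInstance, inferInstance,
    fun v hv => H.normalCore_le ?_⟩
  have hπ (x : F) : π (R u (R (u⁻¹ * v) x)) = π (R u x) :=
    MulAut.map_apply_of_mem_ker_precompPerm hv (π.comp (R u).toMonoidHom) x
  rw [← QuotientGroup.ker_mk' H.normalCore, MonoidHom.mem_ker, Pal_inv_mul_Pal, Pal]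
  rw [map_mul (R u), map_mul π, hπ, map_inv, map_inv, inv_mul_cancel]

/-- `Pal` is continuous for the profinite topology on `F₂`: for every `u` and
every finite-index normal subgroup `H`, there is a finite-index normal subgroup
`K` such that `u⁻¹ v ∈ K` implies `Pal(u)⁻¹ Pal(v) ∈ H`. -/
theorem Pal_profinite_continuous (u : F) (H : Subgroup F)
    (hHn : H.Normal) (hHf : H.FiniteIndex) :
    ∃ K : Subgroup F, K.Normal ∧ K.FiniteIndex ∧
      ∀ v : F, u⁻¹ * v ∈ K → (Pal u)⁻¹ * Pal v ∈ H :=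
  Pal_profinite_continuous_general u H hHf

end PalWord
end
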